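/- arXiv:2503.15018 — 7 statements merged into one kernel-verified Lean document; each statement's English description precedes it below -/
import Mathlib

section
/- For every a > 0, H(w_+) - H(w_-) = (2+a)√(a + a²/4) + 2 log(1 + a/2 - √(a + a²/4)), and this quantity is strictly positive. (This explicit expression is the upper tail large deviation rate function r^packed(a) for the system of reflected Brownian motions with packed initial condition.) -/
open Real

/-- `H a w = (w² - 1)/2 + (2+a)(w+1) + log(-w)` -/
noncomputable def H (a w : ℝ) : ℝ := (w ^ 2 - 1) / 2 + (2 + a) * (w + 1) + Real.log (-w)

/-- `w₊ = -1 - a/2 + √(a + a²/4)` -/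
noncomputable def wp (a : ℝ) : ℝ := -1 - a / 2 + Real.sqrt (a + a ^ 2 / 4)

/-- `w₋ = -1 - a/2 - √(a + a²/4)` -/
noncomputable def wm (a : ℝ) : ℝ := -1 - a / 2 - Real.sqrt (a + a ^ 2 / 4)

/-- The upper tail rate function for packed initial conditions. -/
noncomputable def rPacked (a : ℝ) : ℝ :=
  (2 + a) * Real.sqrt (a + a ^ 2 / 4) + 2 * Real.log (1 + a / 2 - Real.sqrt (a + a ^ 2 / 4))

lemma two_log_lt (y : ℝ) (hy : 1 < y) : 2 * Real.log y < y - y⁻¹ := by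
  have key : StrictMonoOn (fun t : ℝ => t - t⁻¹ - 2 * Real.log t) (Set.Ici 1) := by
    apply strictMonoOn_of_deriv_pos (convex_Ici 1)
    · apply ContinuousOn.sub
      · apply ContinuousOn.sub continuousOn_id
        exact continuousOn_inv₀.mono (fun z hz => by
          simp only [Set.mem_compl_iff, Set.mem_singleton_iff]
          have : (1:ℝ) ≤ z := hz
          linarith)
      · exact (continuousOn_const.mul (Real.continuousOn_log.mono (fun z hz => by
          have : (1:ℝ) ≤ z := hz
          simp only [Set.mem_compl_iff, Set.mem_singleton_iff]
          linarith)))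
    · intro x hx
      rw [interior_Ici] at hx
      have hx0 : (0:ℝ) < x := lt_trans one_pos hx
      have hd : HasDerivAt (fun t : ℝ => t - t⁻¹ - 2 * Real.log t)
          (1 - -(x ^ 2)⁻¹ - 2 * x⁻¹) x := by
        exact ((hasDerivAt_id x).sub (hasDerivAt_inv hx0.ne')).sub
          ((Real.hasDerivAt_log hx0.ne').const_mul 2)
      rw [hd.deriv]
      have h1 : (1 - x⁻¹) ^ 2 > 0 := by
        have : x⁻¹ < 1 := by
          rw [inv_lt_one_iff₀]; right; exact hx
        have h0 : (0:ℝ) < 1 - x⁻¹ := by linarith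
        positivity
      have h2 : (x ^ 2)⁻¹ = x⁻¹ * x⁻¹ := by
        rw [sq, mul_inv]
      nlinarith [sq_nonneg (1 - x⁻¹)]
  have h1 : (fun t : ℝ => t - t⁻¹ - 2 * Real.log t) 1 <
      (fun t : ℝ => t - t⁻¹ - 2 * Real.log t) y :=
    key (Set.self_mem_Ici) (le_of_lt hy) hy
  simp only [Real.log_one, inv_one] at h1
  linarith

theorem stmt_2 (a : ℝ) (ha : 0 < a) :
    H a (wp a) - H a (wm a) = rPacked a ∧ 0 < rPacked a := by
  set s := Real.sqrt (a + a ^ 2 / 4) with hs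
  have hs0 : 0 < a + a ^ 2 / 4 := by nlinarith
  have hsq : s ^ 2 = a + a ^ 2 / 4 := Real.sq_sqrt hs0.le
  have hspos : 0 < s := Real.sqrt_pos.mpr hs0
  have hbt : (1 + a / 2 - s) * (1 + a / 2 + s) = 1 := by nlinarith
  have hptpos : (0:ℝ) < 1 + a / 2 + s := by linarith
  have hmtpos : (0:ℝ) < 1 + a / 2 - s := by
    by_contra h
    push_neg at h
    nlinarith
  have hxgt1 : (1:ℝ) < 1 + a / 2 + s := by linarith
  have hinv : (1 + a / 2 + s)⁻¹ = 1 + a / 2 - s := by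
    field_simp
    linarith [hbt]
  have hlog : Real.log (1 + a / 2 + s) = - Real.log (1 + a / 2 - s) := by
    rw [← hinv, Real.log_inv, neg_neg]
  constructor
  · have hp : -(wp a) = 1 + a / 2 - s := by unfold wp; rw [← hs]; ring
    have hm : -(wm a) = 1 + a / 2 + s := by unfold wm; rw [← hs]; ring
    have hpoly : H a (wp a) - H a (wm a)
        = (2 + a) * s + (Real.log (-(wp a)) - Real.log (-(wm a))) := by
      unfold H wp wm
      rw [← hs]
      ring
    rw [hpoly, hp, hm, hlog, rPacked, ← hs]
    ring
  · -- positivity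
    set x := 1 + a / 2 + s with hx
    have hx1 : (1:ℝ) < x := hxgt1
    have hx0 : (0:ℝ) < x := by linarith
    have hy1 : (1:ℝ) < x ^ 2 := by nlinarith
    have hkey := two_log_lt (x ^ 2) hy1
    rw [Real.log_pow] at hkey
    have hrp : rPacked a = (x ^ 2 - (x ^ 2)⁻¹) / 2 - 2 * Real.log x := by
      have hbs : 1 + a / 2 - s = x⁻¹ := hinv.symm
      rw [rPacked, ← hs, hbs, Real.log_inv]
      have hs_eq : s = (x - x⁻¹) / 2 := by
        have : x⁻¹ = 1 + a / 2 - s := hinv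
        rw [this]; ring
      have hb_eq : 2 + a = x + x⁻¹ := by
        have : x⁻¹ = 1 + a / 2 - s := hinv
        rw [this, hx]; ring
      rw [hs_eq, hb_eq]
      have hxne : x ≠ 0 := hx0.ne'
      field_simp
      ring
    rw [hrp]
    push_cast at hkey
    linarith
end

section
/- For every a > 0, H(w_+) > 0 and H(w_-) < 0. -/
open Real

/-! `-w₊` and `-w₋` are the roots `x` and `x⁻¹` of `x + x⁻¹ = 2 + a`, with `0 < x < 1`. In terms of
such an `x` and of `L = log x`, `H` at `-x` equals `(1 - x)³/(2x) + (L - sinh L)`, using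
`sinh (log x) = (x - x⁻¹)/2`. Both summands have the sign of `1 - x`, so `H(w₊) > 0`, and `H(w₋) < 0`
by the same identity at `x⁻¹`. -/

lemma H_neg_eq {x : ℝ} (hx : 0 < x) :
    H (x + x⁻¹ - 2) (-x) = (1 - x) ^ 3 / (2 * x) + (log x - sinh (log x)) := by
  rw [sinh_log hx, H, neg_neg]
  field_simp
  ring

lemma H_neg_pos_of_lt_one {x : ℝ} (hx₀ : 0 < x) (hx₁ : x < 1) : 0 < H (x + x⁻¹ - 2) (-x) := by
  rw [H_neg_eq hx₀]
  have hcube : 0 < (1 - x) ^ 3 / (2 * x) := by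
    have : 0 < 1 - x := by linarith
    positivity
  have hsinh : sinh (log x) < log x := sinh_lt_self_iff.2 (log_neg hx₀ hx₁)
  linarith

lemma H_neg_neg_of_one_lt {x : ℝ} (hx : 1 < x) : H (x + x⁻¹ - 2) (-x) < 0 := by
  have hx₀ : 0 < x := by linarith
  rw [H_neg_eq hx₀]
  have hcube : (1 - x) ^ 3 / (2 * x) < 0 :=
    div_neg_of_neg_of_pos (Odd.pow_neg (by decide) (by linarith)) (by positivity)
  have hsinh : log x < sinh (log x) := self_lt_sinh_iff.2 (log_pos hx)
  linarith

lemma wp_mul_wm {a : ℝ} (ha : 0 ≤ a) : wp a * wm a = 1 := by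
  have hs : √(a + a ^ 2 / 4) ^ 2 = a + a ^ 2 / 4 := sq_sqrt (by positivity)
  rw [wp, wm]
  linear_combination -hs

lemma wp_mem_Ioo {a : ℝ} (ha : 0 < a) : wp a ∈ Set.Ioo (-1) 0 := by
  have hs : √(a + a ^ 2 / 4) ^ 2 = a + a ^ 2 / 4 := sq_sqrt (by positivity)
  have hs₀ : 0 ≤ √(a + a ^ 2 / 4) := sqrt_nonneg _
  constructor <;> rw [wp] <;> nlinarith

theorem stmt_4 (a : ℝ) (ha : 0 < a) :
    0 < H a (wp a) ∧ H a (wm a) < 0 := by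
  obtain ⟨hwp₁, hwp₀⟩ := wp_mem_Ioo ha
  set x := -wp a with hx
  have hwp : wp a = -x := by rw [hx, neg_neg]
  have hwm : wm a = -x⁻¹ := by
    rw [hx, inv_neg, neg_neg]
    exact eq_inv_of_mul_eq_one_right (wp_mul_wm ha.le)
  have ha_eq : a = x + x⁻¹ - 2 := by
    rw [← neg_neg x⁻¹, ← hwm, hx, wp, wm]
    ring
  rw [hwp, hwm, ha_eq]
  refine ⟨H_neg_pos_of_lt_one (by linarith) (by linarith), ?_⟩
  rw [show x + x⁻¹ - 2 = x⁻¹ + x⁻¹⁻¹ - 2 by rw [inv_inv]; ring]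
  exact H_neg_neg_of_one_lt ((one_lt_inv₀ (by linarith)).2 (by linarith))
end

section
/- The function z ↦ (z+1)(φ(z)+1) is a strictly increasing bijection from (-∞,-1) onto (-∞,0). Consequently, for every a > 0 there exists a unique z_a ∈ (-∞,-1) satisfying (z_a + 1)(φ(z_a) + 1) + a = 0. -/
/-!
Since `x ↦ x * exp x` decreases on `(-∞, -1]` and increases on `[-1, ∞)`, `φ` is strictly
decreasing; together with `z + 1 < 0 < φ z + 1` this makes `(z + 1) * (φ z + 1)` negative and
strictly increasing. To reach a value `y < 0`, parametrise by `w = φ z`: the point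
`z = y / (w + 1) - 1` works as soon as `z * exp z = w * exp w`, and the difference of the two
sides changes sign on `(-1, 0]` (it tends to `exp (-1)` as `w → -1⁺` and equals
`(y - 1) * exp (y - 1) < 0` at `w = 0`), so the intermediate value theorem provides `w`.
-/

open Real Set Filter Topology

lemma hasDerivAt_mul_exp (x : ℝ) : HasDerivAt (fun x => x * exp x) ((x + 1) * exp x) x :=
  ((hasDerivAt_id' x).fun_mul (hasDerivAt_exp x)).congr_deriv (by ring)

lemma strictMonoOn_mul_exp : StrictMonoOn (fun x => x * exp x) (Ici (-1)) := by
  refine strictMonoOn_of_deriv_pos (convex_Ici _) (by fun_prop) fun x hx => ?_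
  rw [interior_Ici, mem_Ioi] at hx
  rw [(hasDerivAt_mul_exp x).deriv]
  exact mul_pos (by linarith) (exp_pos x)

lemma strictAntiOn_mul_exp : StrictAntiOn (fun x => x * exp x) (Iic (-1)) := by
  refine strictAntiOn_of_deriv_neg (convex_Iic _) (by fun_prop) fun x hx => ?_
  rw [interior_Iic, mem_Iio] at hx
  rw [(hasDerivAt_mul_exp x).deriv]
  exact mul_neg_of_neg_of_pos (by linarith) (exp_pos x)

lemma tendsto_mul_exp_atBot : Tendsto (fun x => x * exp x) atBot (𝓝 0) := by
  simpa [Function.comp_def] using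
    (tendsto_pow_mul_exp_neg_atTop_nhds_zero 1).neg.comp tendsto_neg_atBot_atTop

lemma tendsto_div_add_one_nhdsGT_neg_one {y : ℝ} (hy : y < 0) :
    Tendsto (fun w => y / (w + 1)) (𝓝[>] (-1)) atBot := by
  have hshift : Tendsto (fun w : ℝ => w + 1) (𝓝[>] (-1)) (𝓝[>] 0) := by
    simpa using (continuous_add_const (1 : ℝ)).continuousWithinAt.tendsto_nhdsWithin
      (s := Ioi (-1)) (x := -1) (t := Ioi 0) fun w (hw : -1 < w) => show 0 < w + 1 by linarith
  simpa [div_eq_mul_inv] using (tendsto_inv_nhdsGT_zero.comp hshift).const_mul_atTop_of_neg hy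

section

variable {φ : ℝ → ℝ}
  (hφ : ∀ z : ℝ, z < -1 → φ z ∈ Ioo (-1 : ℝ) 0 ∧ φ z * exp (φ z) = z * exp z)
include hφ

lemma strictAntiOn_of_mul_exp_eq : StrictAntiOn φ (Iio (-1)) := by
  intro z₁ hz₁ z₂ hz₂ h
  obtain ⟨hφ₁, he₁⟩ := hφ z₁ hz₁
  obtain ⟨hφ₂, he₂⟩ := hφ z₂ hz₂
  refine (strictMonoOn_mul_exp.lt_iff_lt (mem_Ici.2 hφ₂.1.le) (mem_Ici.2 hφ₁.1.le)).1 ?_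
  simp only [he₁, he₂]
  exact strictAntiOn_mul_exp (mem_Iic.2 (le_of_lt hz₁)) (mem_Iic.2 (le_of_lt hz₂)) h

lemma strictMonoOn_add_one_mul_add_one :
    StrictMonoOn (fun z => (z + 1) * (φ z + 1)) (Iio (-1)) := by
  intro z₁ hz₁ z₂ hz₂ h
  have hanti := strictAntiOn_of_mul_exp_eq hφ hz₁ hz₂ h
  have hφ₂ := (hφ z₂ hz₂).1.1
  have hz₂' : z₂ < -1 := hz₂
  dsimp only
  nlinarith

lemma mapsTo_add_one_mul_add_one :
    MapsTo (fun z => (z + 1) * (φ z + 1)) (Iio (-1)) (Iio 0) := fun z (hz : z < -1) =>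
  show (z + 1) * (φ z + 1) < 0 from
    mul_neg_of_neg_of_pos (by linarith) (by linarith [(hφ z hz).1.1])

lemma surjOn_add_one_mul_add_one :
    SurjOn (fun z => (z + 1) * (φ z + 1)) (Iio (-1)) (Iio 0) := by
  intro y (hy : y < 0)
  set f : ℝ → ℝ := fun x => x * exp x
  set h : ℝ → ℝ := fun w => f (y / (w + 1) - 1) - f w
  have hcont : ContinuousOn h (Ioc (-1) 0) := by
    have : ∀ w ∈ Ioc (-1 : ℝ) 0, w + 1 ≠ 0 := fun w hw => by linarith [hw.1]
    fun_prop (disch := assumption)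
  have hlim : Tendsto h (𝓝[>] (-1)) (𝓝 (0 - f (-1))) := by
    have hf : Tendsto f (𝓝[>] (-1)) (𝓝 (f (-1))) :=
      ((continuous_id.mul continuous_exp).tendsto (-1)).mono_left nhdsWithin_le_nhds
    simpa [h, sub_eq_add_neg] using (tendsto_mul_exp_atBot.comp
      (tendsto_atBot_add_const_right _ (-1) (tendsto_div_add_one_nhdsGT_neg_one hy))).sub hf
  have h0 : (0 : ℝ) ∈ Ico (h 0) (0 - f (-1)) := by
    refine ⟨?_, by simp [f]; positivity⟩
    simpa [h, f] using (mul_neg_of_neg_of_pos (by linarith : y - 1 < 0) (exp_pos (y - 1))).le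
  obtain ⟨w, ⟨hw₁, -⟩, hw⟩ := isPreconnected_Ioc.intermediate_value_Ico
    (right_mem_Ioc.2 (by norm_num)) (le_principal_iff.2 (Ioc_mem_nhdsGT (by norm_num))) hcont hlim h0
  set z := y / (w + 1) - 1
  have hz : z < -1 := by
    have : y / (w + 1) < 0 := div_neg_of_neg_of_pos hy (by linarith)
    linarith
  obtain ⟨hφz, heq⟩ := hφ z hz
  have hφw : φ z = w := strictMonoOn_mul_exp.injOn (mem_Ici.2 hφz.1.le) (mem_Ici.2 hw₁.le) (by
    simp only [f, h] at hw heq ⊢; linarith)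
  refine ⟨z, hz, ?_⟩
  have hw0 : w + 1 ≠ 0 := by linarith
  show (z + 1) * (φ z + 1) = y
  rw [hφw, show z + 1 = y / (w + 1) by ring, div_mul_cancel₀ _ hw0]

end

theorem stmt_8 (φ : ℝ → ℝ)
    (hφ : ∀ z : ℝ, z < -1 → φ z ∈ Set.Ioo (-1 : ℝ) 0 ∧ φ z * Real.exp (φ z) = z * Real.exp z) :
    StrictMonoOn (fun z => (z + 1) * (φ z + 1)) (Set.Iio (-1 : ℝ)) ∧
    Set.BijOn (fun z => (z + 1) * (φ z + 1)) (Set.Iio (-1 : ℝ)) (Set.Iio (0 : ℝ)) ∧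
    (∀ a : ℝ, 0 < a → ∃! z : ℝ, z < -1 ∧ (z + 1) * (φ z + 1) + a = 0) := by
  have mono := strictMonoOn_add_one_mul_add_one hφ
  have bij : BijOn (fun z => (z + 1) * (φ z + 1)) (Iio (-1)) (Iio 0) :=
    ⟨mapsTo_add_one_mul_add_one hφ, mono.injOn, surjOn_add_one_mul_add_one hφ⟩
  refine ⟨mono, bij, fun a ha => ?_⟩
  obtain ⟨z, hz, hza⟩ := bij.surjOn (show -a ∈ Iio 0 by simpa using ha)
  refine ⟨z, ⟨hz, by simp only at hza; linarith⟩, fun z' ⟨hz', hz'a⟩ => mono.injOn hz' hz ?_⟩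
  simp only at hza ⊢
  linarith
end

section
/- Fix a > 0 and define F_a : (-∞,-1) → ℝ by F_a(z) = (φ(z) - z)·((z + φ(z))/2 + 1 + a). Then F_a attains its global maximum over (-∞,-1), and the maximum is attained exactly at the unique point z_a ∈ (-∞,-1) satisfying (z_a + 1)(φ(z_a) + 1) + a = 0. (The maximal value F_a(z_a) is the upper tail large deviation rate function r^flat(a) for the system of reflected Brownian motions with periodic initial condition.) -/
/-!
Put `w = φ z` and let `s = (w - z) / 2 > 0` be the half-gap. From `w e^w = z e^z` we get
`z = w e^{2s}`, hence `w = s - s coth s` and `z = -s - s coth s`; in particular `s` determines `z`.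
In this parametrisation `F_a(z) = 2s (1 + a - s coth s)` and `-(z + 1)(w + 1) = s² - (s coth s - 1)²`,
and the derivative in `s` of the former is `2a` minus twice the latter. Since `s² - (s coth s - 1)²`
is strictly increasing on `s > 0`, `F_a` is strictly concave in `s` with its critical point exactly
where `(z + 1)(w + 1) + a = 0`.
-/

open Real Set

lemma lt_of_hasDerivAt_of_strictAntiOn {f f' : ℝ → ℝ} {D : Set ℝ} {c x : ℝ} (hD : Convex ℝ D)
    (hf : ∀ y ∈ D, HasDerivAt f (f' y) y) (hf' : StrictAntiOn f' D) (hc : c ∈ D)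
    (hfc : f' c = 0) (hx : x ∈ D) (hxc : x ≠ c) : f x < f c := by
  have hcont {u v : ℝ} (hu : u ∈ D) (hv : v ∈ D) : ContinuousOn f (Icc u v) := fun y hy =>
    (hf y (hD.ordConnected.out hu hv hy)).continuousAt.continuousWithinAt
  have hderiv {u v : ℝ} (hu : u ∈ D) (hv : v ∈ D) :
      ∀ y ∈ interior (Icc u v), HasDerivWithinAt f (f' y) (interior (Icc u v)) y := fun y hy =>
    (hf y (hD.ordConnected.out hu hv (interior_subset hy))).hasDerivWithinAt
  rcases hxc.lt_or_gt with hlt | hgt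
  · refine strictMonoOn_of_hasDerivWithinAt_pos (convex_Icc x c) (hcont hx hc) (hderiv hx hc)
      (fun y hy => ?_) ⟨le_rfl, hlt.le⟩ ⟨hlt.le, le_rfl⟩ hlt
    rw [interior_Icc] at hy
    exact hfc ▸ hf' (hD.ordConnected.out hx hc (Ioo_subset_Icc_self hy)) hc hy.2
  · refine strictAntiOn_of_hasDerivWithinAt_neg (convex_Icc c x) (hcont hc hx) (hderiv hc hx)
      (fun y hy => ?_) ⟨le_rfl, hgt.le⟩ ⟨hgt.le, le_rfl⟩ hgt
    rw [interior_Icc] at hy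
    exact hfc ▸ hf' hc (hD.ordConnected.out hc hx (Ioo_subset_Icc_self hy)) hy.1

noncomputable def sCoth (s : ℝ) : ℝ := s * cosh s / sinh s

lemma hasDerivAt_sCoth {s : ℝ} (hs : s ≠ 0) :
    HasDerivAt sCoth ((cosh s * sinh s - s) / sinh s ^ 2) s := by
  have hS : sinh s ≠ 0 := sinh_ne_zero.2 hs
  refine (((hasDerivAt_id' s).mul (hasDerivAt_cosh s)).div (hasDerivAt_sinh s) hS).congr_deriv ?_
  simp only [Pi.mul_apply]
  field_simp
  linear_combination (-s) * cosh_sq s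

lemma eq_half_sub_sCoth_of_mul_exp_eq {z w : ℝ} (hzw : z ≠ w) (h : w * exp w = z * exp z) :
    w = (w - z) / 2 - sCoth ((w - z) / 2) := by
  set s := (w - z) / 2 with hs_def
  have hs : s ≠ 0 := fun h0 => hzw (by linarith)
  have hz : z = w * (exp s * exp s) := by
    rw [← exp_add, show s + s = w - z by ring, exp_sub]
    field_simp
    linarith
  have hsinh : w * sinh s = s * sinh s - s * cosh s := by
    apply mul_right_cancel₀ (exp_ne_zero s)
    have hes : exp s * exp (-s) = 1 := by rw [← exp_add, add_neg_cancel, exp_zero]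
    rw [sinh_eq, cosh_eq]
    linear_combination (-(1 : ℝ) / 2) * hz + (s - w / 2) * hes
  unfold sCoth
  field_simp [sinh_ne_zero.2 hs]
  linarith

noncomputable def rateParam (a s : ℝ) : ℝ := 2 * s * (1 + a - sCoth s)

noncomputable def constraintParam (s : ℝ) : ℝ := s ^ 2 - (sCoth s - 1) ^ 2

lemma sub_mul_eq_rateParam {z w : ℝ} (a : ℝ) (hzw : z ≠ w) (h : w * exp w = z * exp z) :
    (w - z) * ((z + w) / 2 + 1 + a) = rateParam a ((w - z) / 2) := by
  have hw := eq_half_sub_sCoth_of_mul_exp_eq hzw h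
  unfold rateParam
  linear_combination (w - z) * hw

lemma add_one_mul_add_one_eq_neg_constraintParam {z w : ℝ} (hzw : z ≠ w)
    (h : w * exp w = z * exp z) : (z + 1) * (w + 1) = -constraintParam ((w - z) / 2) := by
  have hw := eq_half_sub_sCoth_of_mul_exp_eq hzw h
  unfold constraintParam
  linear_combination ((z + w) / 2 + 2 - sCoth ((w - z) / 2)) * hw

lemma hasDerivAt_rateParam (a : ℝ) {s : ℝ} (hs : s ≠ 0) :
    HasDerivAt (rateParam a) (2 * (a - constraintParam s)) s := by
  refine (((hasDerivAt_id' s).const_mul 2).mul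
    ((hasDerivAt_sCoth hs).const_sub (1 + a))).congr_deriv ?_
  unfold constraintParam sCoth
  field_simp
  linear_combination (-s ^ 2) * cosh_sq s

lemma hasDerivAt_constraintParam {s : ℝ} (hs : s ≠ 0) :
    HasDerivAt constraintParam
      (2 * s - 2 * (sCoth s - 1) * ((cosh s * sinh s - s) / sinh s ^ 2)) s :=
  ((hasDerivAt_pow 2 s).sub (((hasDerivAt_sCoth hs).sub_const 1).pow 2)).congr_deriv (by ring)

lemma constraintParam_strictMonoOn : StrictMonoOn constraintParam (Ioi 0) := by
  refine strictMonoOn_of_hasDerivWithinAt_pos (convex_Ioi 0)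
    (fun s hs => (hasDerivAt_constraintParam (ne_of_gt hs)).continuousAt.continuousWithinAt)
    (fun s hs => (hasDerivAt_constraintParam
      (ne_of_gt (interior_subset hs : (0 : ℝ) < s))).hasDerivWithinAt) (fun s hs => ?_)
  rw [interior_Ioi] at hs
  have hS : 0 < sinh s := sinh_pos_iff.2 hs
  have hC : 1 < cosh s := one_lt_cosh.2 (ne_of_gt hs)
  have hnum : 0 < cosh s * (s ^ 2 + sinh s ^ 2) - 2 * s * sinh s := by
    nlinarith [mul_pos (sub_pos.mpr hC) (show (0 : ℝ) < s ^ 2 + sinh s ^ 2 by positivity),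
      sq_nonneg (s - sinh s)]
  have hderiv : 2 * s - 2 * (sCoth s - 1) * ((cosh s * sinh s - s) / sinh s ^ 2)
      = 2 * (cosh s * (s ^ 2 + sinh s ^ 2) - 2 * s * sinh s) / sinh s ^ 3 := by
    unfold sCoth
    field_simp
    linear_combination (-s * sinh s) * cosh_sq s
  rw [hderiv]
  positivity

lemma rateParam_lt_of_constraintParam_eq {a s t : ℝ} (hs : 0 < s) (ht : 0 < t) (hst : s ≠ t)
    (hta : constraintParam t = a) : rateParam a s < rateParam a t :=
  lt_of_hasDerivAt_of_strictAntiOn (convex_Ioi 0)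
    (fun y hy => hasDerivAt_rateParam a (ne_of_gt hy))
    (fun x hx y hy hxy => by linarith [constraintParam_strictMonoOn hx hy hxy])
    ht (by rw [hta, sub_self, mul_zero]) hs hst

theorem stmt_11_general (φ : ℝ → ℝ)
    (hφ : ∀ z : ℝ, z < -1 → φ z ∈ Set.Ioo (-1 : ℝ) 0 ∧ φ z * Real.exp (φ z) = z * Real.exp z)
    (a : ℝ)
    (za : ℝ) (hza : za < -1) (hza' : (za + 1) * (φ za + 1) + a = 0) :
    ∀ z : ℝ, z < -1 → z ≠ za →
      (φ z - z) * ((z + φ z) / 2 + 1 + a) < (φ za - za) * ((za + φ za) / 2 + 1 + a) := by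
  intro z hz hne
  obtain ⟨⟨hw, -⟩, hwz⟩ := hφ z hz
  obtain ⟨⟨hwa, -⟩, hwaz⟩ := hφ za hza
  have hzw : z ≠ φ z := by linarith
  have hzwa : za ≠ φ za := by linarith
  have hs_ne : (φ z - z) / 2 ≠ (φ za - za) / 2 := fun h => hne <| by
    have hw_eq := eq_half_sub_sCoth_of_mul_exp_eq hzw hwz
    have hwa_eq := eq_half_sub_sCoth_of_mul_exp_eq hzwa hwaz
    rw [h] at hw_eq
    linarith
  have hconstr : constraintParam ((φ za - za) / 2) = a := by
    linarith [add_one_mul_add_one_eq_neg_constraintParam hzwa hwaz]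
  rw [sub_mul_eq_rateParam a hzw hwz, sub_mul_eq_rateParam a hzwa hwaz]
  exact rateParam_lt_of_constraintParam_eq (by linarith) (by linarith) hs_ne hconstr

theorem stmt_11 (φ : ℝ → ℝ)
    (hφ : ∀ z : ℝ, z < -1 → φ z ∈ Set.Ioo (-1 : ℝ) 0 ∧ φ z * Real.exp (φ z) = z * Real.exp z)
    (a : ℝ) (ha : 0 < a)
    (za : ℝ) (hza : za < -1) (hza' : (za + 1) * (φ za + 1) + a = 0) :
    ∀ z : ℝ, z < -1 → z ≠ za →
      (φ z - z) * ((z + φ z) / 2 + 1 + a) < (φ za - za) * ((za + φ za) / 2 + 1 + a) :=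
  stmt_11_general φ hφ a za hza hza'
end

section
/- There exist constants C > 0 and M > 0 such that |r^flat(a) - (a+1)²/2| ≤ C·a³·e^{-a} for all a > M; i.e., r^flat(a) = (a+1)²/2 + O(a³ e^{-a}) as a → ∞. -/
open Real

theorem stmt_13 (φ : ℝ → ℝ)
    (hφ : ∀ z : ℝ, z < -1 → φ z ∈ Set.Ioo (-1 : ℝ) 0 ∧ φ z * Real.exp (φ z) = z * Real.exp z)
    (rFlat : ℝ → ℝ)
    (hr : ∀ a : ℝ, 0 < a →
      IsGreatest ((fun z => (φ z - z) * ((z + φ z) / 2 + 1 + a)) '' Set.Iio (-1 : ℝ)) (rFlat a)) :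
    ∃ C > (0 : ℝ), ∃ M > (0 : ℝ), ∀ a : ℝ, M < a →
      |rFlat a - (a + 1) ^ 2 / 2| ≤ C * a ^ 3 * Real.exp (-a) := by
  refine ⟨4, by norm_num, 1, by norm_num, fun a ha => ?_⟩
  have ha0 : (0:ℝ) < a := by linarith
  obtain ⟨hmem, hub⟩ := hr a ha0
  -- Upper bound: rFlat a ≤ (a+1)^2/2 by AM-GM at every point
  have hupper : rFlat a ≤ (a + 1) ^ 2 / 2 := by
    obtain ⟨z, hz, hfz⟩ := hmem
    have hz' : z < -1 := hz
    obtain ⟨⟨hw1, hw0⟩, _⟩ := hφ z hz'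
    have : (φ z - z) * ((z + φ z) / 2 + 1 + a) ≤ (a + 1) ^ 2 / 2 := by
      nlinarith [sq_nonneg ((φ z - z) / 2 - ((z + φ z) / 2 + 1 + a)),
        sq_nonneg (φ z + 1 + a)]
    rw [← hfz]; exact this
  -- Lower bound via z₀ = -(1+a)
  have hz₀lt : -(1 + a) < (-1 : ℝ) := by linarith
  obtain ⟨⟨hw1, hw0⟩, hweq⟩ := hφ (-(1 + a)) hz₀lt
  set w := φ (-(1 + a)) with hw
  have hlow : (w + 1 + a) ^ 2 / 2 ≤ rFlat a := by
    have hmem2 : (w - (-(1 + a))) * (((-(1 + a)) + w) / 2 + 1 + a) ≤ rFlat a :=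
      hub ⟨-(1 + a), hz₀lt, rfl⟩
    nlinarith [hmem2]
  -- Bound on |w| : -w ≤ (1+a) * exp (-a)
  have hwval : -w = (1 + a) * Real.exp (-(1 + a) - w) := by
    have he : Real.exp (-(1 + a) - w) = Real.exp (-(1 + a)) / Real.exp w :=
      Real.exp_sub _ _
    have hne : Real.exp w ≠ 0 := (Real.exp_pos w).ne'
    rw [he]
    field_simp
    ring_nf
    ring_nf at hweq
    linarith [hweq]
  have hwbound : -w ≤ (1 + a) * Real.exp (-a) := by
    have hexp : Real.exp (-(1 + a) - w) ≤ Real.exp (-a) :=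
      Real.exp_le_exp.mpr (by linarith)
    have h1a : (0:ℝ) < 1 + a := by linarith
    calc -w = (1 + a) * Real.exp (-(1 + a) - w) := hwval
      _ ≤ (1 + a) * Real.exp (-a) := mul_le_mul_of_nonneg_left hexp (le_of_lt h1a)
  -- combine
  have hepos : (0:ℝ) < Real.exp (-a) := Real.exp_pos _
  rw [abs_le]
  constructor
  · -- -(4 a³ e^{-a}) ≤ rFlat a - (a+1)²/2
    have key : (w + 1 + a) ^ 2 / 2 - (a + 1) ^ 2 / 2 ≥ w * (1 + a) := by nlinarith [sq_nonneg w]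
    have h2 : w * (1 + a) ≥ -((1 + a) ^ 2 * Real.exp (-a)) := by nlinarith
    have h3 : (1 + a) ^ 2 ≤ 4 * a ^ 3 := by
      nlinarith [mul_nonneg (sq_nonneg a) (by linarith : (0:ℝ) ≤ a - 1),
        mul_nonneg (by linarith : (0:ℝ) ≤ 3 * a + 1) (by linarith : (0:ℝ) ≤ a - 1)]
    nlinarith
  · have hpos : (0:ℝ) ≤ 4 * a ^ 3 * Real.exp (-a) := by positivity
    linarith [hupper]
end

section
/- There exist constants C > 0 and δ > 0 such that |z_a - (-1 - √a - a/3)| ≤ C·a^{3/2} for all 0 < a < δ; i.e., z_a = -1 - √a - a/3 + O(a^{3/2}) as a → 0+. -/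
open Real

set_option maxHeartbeats 1000000 in
private lemma aux_d' (s d r K : ℝ) (hr : 0 < r) (hr' : r ≤ 1/1000)
    (hs1 : 3/2*r ≤ s) (hs2 : s ≤ 3*r) (hd0 : 0 ≤ d)
    (hsd : s^2 = d^2 + 4*r^2)
    (hK1 : -(128*r^4) ≤ K) (hK2 : K ≤ 128*r^4)
    (hrel : s*d = (2/3)*(s^3 - 3*r^2*s) + K) :
    |d - (2/3)*r^2| ≤ 87*r^3 := by
  have hrel2 : s*d = (2/3)*s*(d^2+r^2) + K := by linear_combination hrel + (2/3)*s*hsd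
  have hds : d ≤ s := by nlinarith
  have hd5 : d ≤ 2*r^2 := by
    nlinarith [mul_nonneg hd0 hd0, mul_nonneg (mul_nonneg hd0 hd0) hr.le, mul_nonneg hd0 hr.le]
  rw [abs_le]
  constructor
  · nlinarith [mul_nonneg hd0 hd0, mul_pos hr (mul_pos hr hr), sq_nonneg d]
  · nlinarith [mul_nonneg hd0 hd0, mul_pos hr (mul_pos hr hr), sq_nonneg d]

set_option maxHeartbeats 1000000 in
private lemma aux_u' (u d r : ℝ) (hr : 0 < r) (hr' : r ≤ 1/1000)
    (hur : r ≤ u) (hu2 : u ≤ 2*r)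
    (hid2 : u^2 = r^2 + u*d)
    (hd : |d - (2/3)*r^2| ≤ 87*r^3) :
    |u - r - r^2/3| ≤ 100*r^3 := by
  obtain ⟨hda, hdb⟩ := abs_le.mp hd
  rw [abs_le]
  constructor
  · nlinarith [mul_pos hr (mul_pos hr hr), mul_pos hr (mul_pos hr (mul_pos hr hr)), sq_nonneg (u - r)]
  · nlinarith [mul_pos hr (mul_pos hr hr), mul_pos hr (mul_pos hr (mul_pos hr hr)), sq_nonneg (u - r)]

set_option maxHeartbeats 1000000 in
private lemma main_est' (u v r : ℝ) (hr : 0 < r) (hr' : r ≤ 1/1000)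
    (huv : u * v = r^2) (hu2 : u ≤ 2*r) (hul : r/2 ≤ u) (_hv2 : v ≤ 2*r) (hvl : r/2 ≤ v)
    (hK : |u^2 - v^2 - (2/3)*(u^3+v^3)| ≤ 128*r^4) :
    |u - r - r^2/3| ≤ 100*r^3 := by
  obtain ⟨hK1, hK2⟩ := abs_le.mp hK
  have hu0 : 0 < u := by nlinarith
  have hv0 : 0 < v := by nlinarith
  have hgt : v < u := by nlinarith [sq_nonneg (u+v), sq_nonneg (u-v), mul_pos hu0 hv0]
  have hur : r ≤ u := by nlinarith [mul_pos hu0 hv0]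
  have hvr : v ≤ r := by nlinarith [mul_pos hu0 hv0]
  have hd := aux_d' (u+v) (u-v) r (u^2 - v^2 - (2/3)*(u^3+v^3)) hr hr'
    (by linarith) (by linarith) (by linarith)
    (by linear_combination 4*huv) hK1 hK2
    (by linear_combination (-2)*(u+v)*huv)
  exact aux_u' u (u-v) r hr hr' hur hu2 (by linear_combination huv) hd

set_option maxHeartbeats 1000000 in
private lemma taylor_bound_v' (v : ℝ) (h0 : 0 < v) (h1 : v ≤ 1/2) :
    |v + v^2/2 + v^3/3 + Real.log (1-v)| ≤ 2*v^4 := by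
  have habs : |v| < 1 := by rw [abs_of_pos h0]; linarith
  have hs := Real.abs_log_sub_add_sum_range_le habs 3
  rw [abs_of_pos h0] at hs
  simp [Finset.sum_range_succ] at hs
  have h2 : v^4/(1-v) ≤ 2*v^4 := by
    rw [div_le_iff₀ (by linarith)]
    nlinarith [pow_nonneg h0.le 4]
  calc |v + v^2/2 + v^3/3 + Real.log (1-v)|
      = |v/1 + v^2/2 + v^3/3 + Real.log (1-v)| := by norm_num
    _ ≤ v^4/(1-v) := by convert hs using 3 <;> norm_num
    _ ≤ 2*v^4 := h2

set_option maxHeartbeats 1000000 in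
private lemma taylor_bound_u' (u : ℝ) (h0 : 0 < u) (h1 : u ≤ 1/2) :
    |(-u) + u^2/2 - u^3/3 + Real.log (1+u)| ≤ 2*u^4 := by
  have habs : |(-u)| < 1 := by rw [abs_neg, abs_of_pos h0]; linarith
  have hs := Real.abs_log_sub_add_sum_range_le habs 3
  rw [abs_neg, abs_of_pos h0] at hs
  simp [Finset.sum_range_succ] at hs
  have h2 : u^4/(1-u) ≤ 2*u^4 := by
    rw [div_le_iff₀ (by linarith)]
    nlinarith [pow_nonneg h0.le 4]
  have heq2 : (-u) + u^2/2 - u^3/3 + Real.log (1+u)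
      = -u + u^2/(1+1) + (-u)^3/(2+1) + Real.log (1+u) := by ring
  rw [heq2]
  exact le_trans hs h2

set_option maxHeartbeats 1000000 in
private lemma exp_cmp' (u v a : ℝ) (hu : 0 < u) (hv0 : 0 < v) (hv1 : v < 1)
    (huv : u * v = a) (ha : 0 < a) (haδ : a < 1e-6)
    (hE : (1-v)*Real.exp v = (1+u)*Real.exp (-u)) :
    v ≤ 2*u ∧ u ≤ 3*v := by
  have hexpu : Real.exp (-u) * Real.exp u = 1 := by rw [← Real.exp_add]; simp
  have h1u : 1 - u ≤ Real.exp (-u) := by linarith [Real.add_one_le_exp (-u)]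
  have h1v : 1 + v ≤ Real.exp v := by linarith [Real.add_one_le_exp v]
  have hCu : (1 + u/2)^2 ≤ Real.exp u := by
    have h := Real.add_one_le_exp (u/2)
    have h2 : Real.exp (u/2) * Real.exp (u/2) = Real.exp u := by
      rw [← Real.exp_add]; ring_nf
    nlinarith [Real.exp_pos (u/2)]
  have hDv : (1 - v/2)^2 * Real.exp v ≤ 1 := by
    have h := Real.add_one_le_exp (-(v/2))
    have h2 : Real.exp (-(v/2)) * Real.exp (-(v/2)) = Real.exp (-v) := by
      rw [← Real.exp_add]; ring_nf
    have h3 : Real.exp (-v) * Real.exp v = 1 := by rw [← Real.exp_add]; simp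
    nlinarith [Real.exp_pos (-(v/2)), Real.exp_pos v, Real.exp_pos (-v)]
  have s1 : 1 - u^2 ≤ (1+u)*Real.exp (-u) := by nlinarith
  have s2 : (1-v/2)^2 * ((1+u)*Real.exp (-u)) ≤ 1 - v := by
    rw [← hE]; nlinarith [Real.exp_pos v, sq_nonneg (1-v/2)]
  have s3 : (1-v/2)^2*(1-u^2) ≤ 1 - v := by nlinarith [sq_nonneg (1-v/2)]
  have hv2u : v ≤ 2*u := by nlinarith [sq_nonneg (v - 2*u), sq_nonneg v, mul_pos hu hv0]
  have s4a : 1 - v^2 ≤ (1-v)*Real.exp v := by nlinarith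
  have s4b : (1+u/2)^2 * ((1-v)*Real.exp v) ≤ 1 + u := by
    rw [hE]
    have hm := mul_le_mul_of_nonneg_right hCu (Real.exp_pos (-u)).le
    nlinarith [Real.exp_pos (-u), sq_nonneg (1+u/2)]
  have s5 : (1+u/2)^2*(1-v^2) ≤ 1 + u := by nlinarith [sq_nonneg (1+u/2)]
  have huu : u ≤ 1 := by
    by_contra h
    push_neg at h
    have hva : v < a := by nlinarith
    nlinarith [sq_nonneg u, sq_nonneg v]
  have hu3v : u ≤ 3*v := by nlinarith [sq_nonneg (u - 3*v), mul_pos hu hv0]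
  exact ⟨hv2u, hu3v⟩

private lemma sqrt_small' (r a : ℝ) (hr0 : 0 ≤ r) (hr2 : r^2 = a) (ha : a < 1e-6) :
    r ≤ 1/1000 := by
  nlinarith [sq_nonneg (r - 1/1000)]

private lemma range_bounds' (u v r a : ℝ) (hu : 0 < u) (hv0 : 0 < v)
    (huv : u * v = a) (hr : 0 < r) (hr2 : r^2 = a)
    (hv2u : v ≤ 2*u) (hu3v : u ≤ 3*v) :
    u ≤ 2*r ∧ r/2 ≤ u ∧ v ≤ 2*r ∧ r/2 ≤ v := by
  refine ⟨?_, ?_, ?_, ?_⟩ <;> nlinarith [mul_pos hu hv0]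

private lemma pow4_bound' (x r : ℝ) (h0 : 0 ≤ x) (h2 : x ≤ 2*r) : x^4 ≤ 16*r^4 := by
  have hx2 : x^2 ≤ 4*r^2 := by nlinarith
  nlinarith [hx2, sq_nonneg x, sq_nonneg r]

set_option maxHeartbeats 2000000 in
theorem stmt_14 (φ : ℝ → ℝ)
    (hφ : ∀ z : ℝ, z < -1 → φ z ∈ Set.Ioo (-1 : ℝ) 0 ∧ φ z * Real.exp (φ z) = z * Real.exp z) :
    ∃ C > (0 : ℝ), ∃ δ > (0 : ℝ), ∀ a : ℝ, 0 < a → a < δ →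
      ∀ za : ℝ, za < -1 → (za + 1) * (φ za + 1) + a = 0 →
        |za - (-1 - Real.sqrt a - a / 3)| ≤ C * a ^ ((3 : ℝ) / 2) := by
  refine ⟨100, by norm_num, 1e-6, by norm_num, fun a ha haδ za hza heq => ?_⟩
  obtain ⟨hmem, hwe⟩ := hφ za hza
  obtain ⟨hw1, hw2⟩ := hmem
  obtain ⟨v, hv_def⟩ : ∃ v : ℝ, v = φ za + 1 := ⟨_, rfl⟩
  obtain ⟨u, hu_def⟩ : ∃ u : ℝ, u = -(za + 1) := ⟨_, rfl⟩
  have hu : 0 < u := by rw [hu_def]; linarith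
  have hv0 : 0 < v := by rw [hv_def]; linarith
  have hv1 : v < 1 := by rw [hv_def]; linarith
  have huv : u * v = a := by rw [hu_def, hv_def]; linear_combination -heq
  have hφza : φ za = v - 1 := by rw [hv_def]; ring
  have hza_eq : za = -1 - u := by rw [hu_def]; ring
  rw [hφza, hza_eq] at hwe
  -- the exponential equation
  have e1 : Real.exp (v-1) * Real.exp 1 = Real.exp v := by rw [← Real.exp_add]; ring_nf
  have e2 : Real.exp (-1-u) * Real.exp 1 = Real.exp (-u) := by rw [← Real.exp_add]; ring_nf
  have hE : (1-v)*Real.exp v = (1+u)*Real.exp (-u) := by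
    linear_combination (-Real.exp 1) * hwe + (v-1) * e1 + (1+u) * e2
  obtain ⟨hv2u, hu3v⟩ := exp_cmp' u v a hu hv0 hv1 huv ha haδ hE
  -- set r = sqrt a and get the range bounds
  obtain ⟨r, hr_def⟩ : ∃ r : ℝ, r = Real.sqrt a := ⟨_, rfl⟩
  have hr : 0 < r := by rw [hr_def]; exact Real.sqrt_pos.mpr ha
  have hr2 : r^2 = a := by rw [hr_def]; exact Real.sq_sqrt ha.le
  have hr' : r ≤ 1/1000 := sqrt_small' r a hr.le hr2 haδ
  have huvr : u * v = r^2 := by rw [hr2]; exact huv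
  obtain ⟨hu2, hul, hv2, hvl⟩ := range_bounds' u v r a hu hv0 huv hr hr2 hv2u hu3v
  -- logarithmic form
  have hlog : Real.log (1-v) + v = Real.log (1+u) + (-u) := by
    have hc := congrArg Real.log hE
    rw [Real.log_mul (by linarith) (Real.exp_ne_zero _),
        Real.log_mul (by linarith) (Real.exp_ne_zero _),
        Real.log_exp, Real.log_exp] at hc
    linarith
  -- Taylor bounds
  have hBv : |v + v^2/2 + v^3/3 + Real.log (1-v)| ≤ 2*v^4 :=
    taylor_bound_v' v hv0 (by linarith)
  have hAu : |(-u) + u^2/2 - u^3/3 + Real.log (1+u)| ≤ 2*u^4 :=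
    taylor_bound_u' u hu (by linarith)
  have hu4 : u^4 ≤ 16*r^4 := pow4_bound' u r hu.le hu2
  have hv4 : v^4 ≤ 16*r^4 := pow4_bound' v r hv0.le hv2
  have hK : |u^2 - v^2 - (2/3)*(u^3+v^3)| ≤ 128*r^4 := by
    obtain ⟨a1, a2⟩ := abs_le.mp hAu
    obtain ⟨b1, b2⟩ := abs_le.mp hBv
    rw [abs_le]
    constructor <;> linarith
  have hfin := main_est' u v r hr hr' huvr hu2 hul hv2 hvl hK
  -- conclude
  have hpow : a ^ ((3:ℝ)/2) = r^3 := by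
    have h1 : a ^ ((3:ℝ)/2) = (a ^ ((1:ℝ)/2)) ^ (3:ℕ) := by
      rw [← Real.rpow_natCast (a ^ ((1:ℝ)/2)) 3, ← Real.rpow_mul ha.le]
      norm_num
    rw [h1, hr_def, Real.sqrt_eq_rpow]
  have hgoal_eq : za - (-1 - Real.sqrt a - a/3) = -(u - r - r^2/3) := by
    linear_combination hza_eq - hr_def - (1/3)*hr2
  rw [hgoal_eq, abs_neg, hpow]
  linarith [hfin]
end

section
/- For every a > 0 one has -z_a > 1 + a. Moreover there exist constants C > 0 and M > 0 such that for all a > M: 0 < -φ(z_a) ≤ C·a·e^{-a} and |z_a - (-1 - a)| ≤ C·a²·e^{-a}; i.e., z_a = -1 - a + O(a² e^{-a}) as a → ∞. -/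
open Real

lemma aux_mono (z w : ℝ) (hzw : z ≤ w) (hw : w ≤ -1) :
    -z * Real.exp z ≤ -w * Real.exp w := by
  have he : (0:ℝ) < Real.exp z := Real.exp_pos z
  have hle : (w - z) + 1 ≤ Real.exp (w - z) := Real.add_one_le_exp _
  have hew : Real.exp w = Real.exp (w - z) * Real.exp z := by
    rw [← Real.exp_add]; ring_nf
  rw [hew]
  nlinarith [mul_nonneg (mul_nonneg (sub_nonneg.2 hzw) (show (0:ℝ) ≤ -w - 1 by linarith)) he.le,
    mul_le_mul_of_nonneg_right (mul_le_mul_of_nonneg_left hle (show (0:ℝ) ≤ -w by linarith)) he.le]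

lemma aux_cube (a : ℝ) (ha : 0 ≤ a) : a ^ 3 ≤ 27 * Real.exp a := by
  have h : a / 3 + 1 ≤ Real.exp (a / 3) := Real.add_one_le_exp _
  have h2 : Real.exp (a / 3) ^ 3 = Real.exp a := by
    rw [← Real.exp_nat_mul]; norm_num; ring_nf
  have h3 : (a/3)^3 ≤ Real.exp (a/3)^3 :=
    pow_le_pow_left₀ (by positivity) (by linarith) 3
  nlinarith [h3, h2]

theorem stmt_15 (φ : ℝ → ℝ)
    (hφ : ∀ z : ℝ, z < -1 → φ z ∈ Set.Ioo (-1 : ℝ) 0 ∧ φ z * Real.exp (φ z) = z * Real.exp z) :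
    (∀ a : ℝ, 0 < a → ∀ za : ℝ, za < -1 → (za + 1) * (φ za + 1) + a = 0 → 1 + a < -za) ∧
    (∃ C > (0 : ℝ), ∃ M > (0 : ℝ), ∀ a : ℝ, M < a →
      ∀ za : ℝ, za < -1 → (za + 1) * (φ za + 1) + a = 0 →
        (0 < -φ za ∧ -φ za ≤ C * a * Real.exp (-a)) ∧
        |za - (-1 - a)| ≤ C * a ^ 2 * Real.exp (-a)) := by
  have part1 : ∀ a : ℝ, 0 < a → ∀ za : ℝ, za < -1 →
      (za + 1) * (φ za + 1) + a = 0 → 1 + a < -za := by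
    intro a ha za hz heq
    obtain ⟨⟨h1, h2⟩, h3⟩ := hφ za hz
    nlinarith [mul_pos (show (0:ℝ) < -(za+1) by linarith) (show (0:ℝ) < -φ za by linarith)]
  refine ⟨part1, 4, by norm_num, 11, by norm_num, ?_⟩
  intro a ha za hz heq
  obtain ⟨⟨h1, h2⟩, h3⟩ := hφ za hz
  have ha0 : (0:ℝ) < a := by linarith
  have hza : za < -1 - a := by have := part1 a ha0 za hz heq; linarith
  -- bound on -φ za
  have hmono : -za * Real.exp za ≤ -(-1 - a) * Real.exp (-1 - a) :=
    aux_mono za (-1 - a) hza.le (by linarith)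
  have hep : Real.exp (-1) ≤ Real.exp (φ za) := Real.exp_le_exp.2 (by linarith)
  have hkey : -φ za * Real.exp (φ za) = -za * Real.exp za := by linarith [h3]
  have hp0 : (0:ℝ) < -φ za := by linarith
  have hexp1 : Real.exp (-1-a) = Real.exp (-1) * Real.exp (-a) := by
    rw [← Real.exp_add]; ring_nf
  have hE : (0:ℝ) < Real.exp (-1) := Real.exp_pos _
  have hEa : (0:ℝ) < Real.exp (-a) := Real.exp_pos _
  have hpb : -φ za ≤ (1 + a) * Real.exp (-a) := by
    have h4 : -φ za * Real.exp (-1) ≤ -φ za * Real.exp (φ za) :=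
      mul_le_mul_of_nonneg_left hep hp0.le
    have h5 : -φ za * Real.exp (-1) ≤ (1 + a) * (Real.exp (-1) * Real.exp (-a)) := by
      rw [← hexp1]; nlinarith
    nlinarith
  have hpb2 : -φ za ≤ 2 * a * Real.exp (-a) := by nlinarith
  -- a * exp (-a) ≤ 1/4
  have hcube := aux_cube a ha0.le
  have hEA : (0:ℝ) < Real.exp a := Real.exp_pos a
  have hae : a * Real.exp (-a) ≤ 1 / 4 := by
    have h4a : 4 * a ≤ Real.exp a := by
      nlinarith [mul_lt_mul_of_pos_left ha ha0,
        mul_lt_mul_of_pos_left (mul_lt_mul_of_pos_left ha ha0) ha0]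
    have hinv : Real.exp a * Real.exp (-a) = 1 := by rw [← Real.exp_add]; simp
    nlinarith [mul_le_mul_of_nonneg_right h4a hEa.le]
  have hp12 : -φ za ≤ 1 / 2 := by nlinarith
  have hden : (1:ℝ)/2 ≤ φ za + 1 := by linarith
  have hz1 : -(za + 1) ≤ 2 * a := by nlinarith
  constructor
  · exact ⟨hp0, by nlinarith⟩
  · have hform : za - (-1 - a) = (za + 1) * (-φ za) := by linear_combination heq
    rw [hform, abs_le]
    constructor <;> nlinarith [mul_le_mul hz1 hpb2 hp0.le (by linarith : (0:ℝ) ≤ 2*a)]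
end
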